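/- Let n ≥ 2 and α ∈ ℝ. The function u(x) = (log|x|)^α satisfies -div(|∇u|^{n-2}∇u) ≤ 0 on {x ∈ ℝⁿ : |x| > 1} if and only if α ≤ 0 or α ≥ 1. -/

import Mathlib

/-! For a radial function `u = f(|x|)` one has `∇u = f'(r) x / r`, so the `n`-Laplace flux
`|∇u|^{n-2} ∇u` is the radial field `g(r) x / rⁿ` with `g = r^{n-1} |f'|^{n-2} f'`, and the
divergence of such a field is `g'(r) / r^{n-1}`. For `f = (log r)^α` the flux is
`g = |α|^{n-2} α (log r)^{(α-1)(n-1)}`, hence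
`div = |α|^{n-2} α (α-1) (n-1) (log r)^{(α-1)(n-1)-1} / rⁿ`, whose sign is that of `α (α-1)`. -/

open Real

/-- The divergence of a vector field `F : ℝⁿ → ℝⁿ`. -/
noncomputable def vdiv (n : ℕ) (F : EuclideanSpace ℝ (Fin n) → EuclideanSpace ℝ (Fin n))
    (x : EuclideanSpace ℝ (Fin n)) : ℝ :=
  ∑ i : Fin n, fderiv ℝ F x (EuclideanSpace.single i (1 : ℝ)) i

open Filter Topology

section Radial

variable {E : Type*} [NormedAddCommGroup E] [InnerProductSpace ℝ E] {x : E}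

theorem hasFDerivAt_norm_of_ne_zero (hx : x ≠ 0) :
    HasFDerivAt (‖·‖) (‖x‖⁻¹ • innerSL ℝ x) x := by
  have h := (hasStrictFDerivAt_norm_sq x).hasFDerivAt.sqrt (by positivity)
  simp only [sqrt_sq (norm_nonneg _)] at h
  convert h using 1
  ext v
  simp only [smul_apply, innerSL_apply_apply, smul_eq_mul, nsmul_eq_mul]
  field_simp
  ring

theorem HasDerivAt.hasFDerivAt_comp_norm {f : ℝ → ℝ} {f' : ℝ} (hf : HasDerivAt f f' ‖x‖)
    (hx : x ≠ 0) : HasFDerivAt (fun y => f ‖y‖) ((f' / ‖x‖) • innerSL ℝ x) x := by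
  have h := hf.comp_hasFDerivAt x (hasFDerivAt_norm_of_ne_zero hx)
  rwa [smul_smul, ← div_eq_mul_inv] at h

theorem HasDerivAt.hasGradientAt_comp_norm [CompleteSpace E] {f : ℝ → ℝ} {f' : ℝ}
    (hf : HasDerivAt f f' ‖x‖) (hx : x ≠ 0) :
    HasGradientAt (fun y => f ‖y‖) ((f' / ‖x‖) • x) x := by
  rw [hasGradientAt_iff_hasFDerivAt, map_smul]
  exact hf.hasFDerivAt_comp_norm hx

end Radial

section Divergence

variable {n : ℕ} {x : EuclideanSpace ℝ (Fin n)}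

theorem vdiv_congr_of_eventuallyEq {F G : EuclideanSpace ℝ (Fin n) → EuclideanSpace ℝ (Fin n)}
    (h : F =ᶠ[𝓝 x] G) : vdiv n F x = vdiv n G x := by
  simp only [vdiv, h.fderiv_eq]

theorem vdiv_smul_self {φ : EuclideanSpace ℝ (Fin n) → ℝ}
    {φ' : StrongDual ℝ (EuclideanSpace ℝ (Fin n))} (hφ : HasFDerivAt φ φ' x) :
    vdiv n (fun y => φ y • y) x = n * φ x + φ' x := by
  have hsum : ∑ i, x i • EuclideanSpace.single i (1 : ℝ) = x := by
    simpa [EuclideanSpace.basisFun_apply] using (EuclideanSpace.basisFun (Fin n) ℝ).sum_repr x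
  have hF : HasFDerivAt (fun y => φ y • y) _ x := hφ.smul (hasFDerivAt_id x)
  have hφ'x : φ' x = ∑ i, φ' (EuclideanSpace.single i 1) * x i := by
    conv_lhs => rw [← hsum]
    simp [mul_comm]
  rw [vdiv, hF.fderiv, hφ'x]
  simp [Finset.sum_add_distrib, mul_comm]

theorem vdiv_radial {g : ℝ → ℝ} {g' : ℝ} (hg : HasDerivAt g g' ‖x‖) (hx : x ≠ 0) :
    vdiv n (fun y => (g ‖y‖ / ‖y‖ ^ n) • y) x = ‖x‖ * g' / ‖x‖ ^ n := by
  have hn : n ≠ 0 := by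
    rintro rfl
    exact hx (Subsingleton.elim x 0)
  obtain ⟨k, rfl⟩ := Nat.exists_eq_succ_of_ne_zero hn
  have hr : ‖x‖ ≠ 0 := norm_ne_zero_iff.mpr hx
  have hψ : HasDerivAt (fun r => g r / r ^ (k + 1)) _ ‖x‖ :=
    hg.div (hasDerivAt_pow (k + 1) ‖x‖) (pow_ne_zero _ hr)
  rw [vdiv_smul_self (hψ.hasFDerivAt_comp_norm hx)]
  simp only [smul_apply, innerSL_apply_apply, real_inner_self_eq_norm_sq,
    smul_eq_mul, Nat.add_sub_cancel]
  field_simp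
  push_cast
  ring

end Divergence

noncomputable def pLaplaceFlux {E : Type*} [NormedAddCommGroup E] [InnerProductSpace ℝ E]
    [CompleteSpace E] (p : ℝ) (u : E → ℝ) (y : E) : E :=
  ‖gradient u y‖ ^ (p - 2) • gradient u y

section LogPower

variable {α : ℝ}

theorem hasDerivAt_log_rpow {r : ℝ} (hr : 1 < r) :
    HasDerivAt (fun t => log t ^ α) (α * log r ^ (α - 1) / r) r := by
  have h := (hasDerivAt_log (by positivity : r ≠ 0)).rpow_const (p := α) (Or.inl (log_pos hr).ne')
  convert h using 1
  field_simp

theorem abs_rpow_sub_two_mul_self_div_eq {a γ L r p : ℝ} (hL : 0 < L) (hr : 0 < r) :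
    |a * L ^ γ / r| ^ (p - 2) * (a * L ^ γ / r / r) =
      |a| ^ (p - 2) * a * L ^ (γ * (p - 1)) / r ^ p := by
  have hLγ : 0 < L ^ γ := rpow_pos_of_pos hL γ
  rw [abs_div, abs_mul, abs_of_pos hLγ, abs_of_pos hr, div_rpow (by positivity) hr.le,
    mul_rpow (abs_nonneg a) hLγ.le, ← rpow_mul hL.le]
  have hp : r ^ p = r ^ (p - 2) * r * r := by
    rw [mul_assoc, ← sq, ← rpow_natCast, ← rpow_add hr]
    norm_num
  have hγ : L ^ (γ * (p - 1)) = L ^ (γ * (p - 2)) * L ^ γ := by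
    rw [← rpow_add hL]
    ring_nf
  rw [hp, hγ]
  field_simp

variable {E : Type*} [NormedAddCommGroup E] [InnerProductSpace ℝ E] [CompleteSpace E] {x : E}

theorem gradient_log_rpow_norm (hx : 1 < ‖x‖) :
    gradient (fun y => log ‖y‖ ^ α) x = (α * log ‖x‖ ^ (α - 1) / ‖x‖ / ‖x‖) • x :=
  ((hasDerivAt_log_rpow hx).hasGradientAt_comp_norm (norm_pos_iff.mp (one_pos.trans hx))).gradient

theorem pLaplaceFlux_log_rpow_norm_eventuallyEq (p : ℝ) (hx : 1 < ‖x‖) :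
    pLaplaceFlux p (fun y => log ‖y‖ ^ α) =ᶠ[𝓝 x]
      fun y => (|α| ^ (p - 2) * α * log ‖y‖ ^ ((α - 1) * (p - 1)) / ‖y‖ ^ p) • y := by
  filter_upwards [(isOpen_lt continuous_const continuous_norm).mem_nhds hx] with y hy
  have hr : 0 < ‖y‖ := one_pos.trans hy
  rw [pLaplaceFlux, gradient_log_rpow_norm hy, norm_smul, smul_smul, norm_div, norm_norm,
    div_mul_cancel₀ _ hr.ne', Real.norm_eq_abs,
    abs_rpow_sub_two_mul_self_div_eq (log_pos hy) hr]

theorem vdiv_pLaplaceFlux_log_rpow_norm {n : ℕ} {x : EuclideanSpace ℝ (Fin n)} (hx : 1 < ‖x‖) :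
    vdiv n (pLaplaceFlux n fun y => log ‖y‖ ^ α) x =
      |α| ^ ((n : ℝ) - 2) * α * ((α - 1) * (n - 1)) *
        (log ‖x‖ ^ ((α - 1) * (n - 1) - 1) / ‖x‖ ^ n) := by
  have hr : 0 < ‖x‖ := one_pos.trans hx
  have hflux := (hasDerivAt_log_rpow (α := (α - 1) * (n - 1)) hx).const_mul
    (|α| ^ ((n : ℝ) - 2) * α)
  rw [vdiv_congr_of_eventuallyEq (pLaplaceFlux_log_rpow_norm_eventuallyEq n hx)]
  simp only [rpow_natCast]
  rw [vdiv_radial hflux (norm_pos_iff.mp hr)]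
  field_simp

theorem rpow_abs_mul_self_mul_sub_one_nonneg_iff {q k : ℝ} (hk : 0 < k) :
    0 ≤ |α| ^ q * α * ((α - 1) * k) ↔ α ≤ 0 ∨ 1 ≤ α := by
  rcases eq_or_ne α 0 with rfl | hα
  · simp
  have hpos : 0 < |α| ^ q * k := mul_pos (rpow_pos_of_pos (abs_pos.mpr hα) q) hk
  rw [show |α| ^ q * α * ((α - 1) * k) = α * (α - 1) * (|α| ^ q * k) by ring,
    mul_nonneg_iff_of_pos_right hpos]
  constructor
  · intro h
    by_contra! h'
    nlinarith
  · rintro (h | h) <;> nlinarith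

end LogPower

theorem log_power_subsolution_iff
    (n : ℕ) (hn : 2 ≤ n) (α : ℝ)
    (u : EuclideanSpace ℝ (Fin n) → ℝ) (hu : u = fun x => Real.log ‖x‖ ^ α) :
    (∀ x : EuclideanSpace ℝ (Fin n), 1 < ‖x‖ →
        -vdiv n (fun y => ‖gradient u y‖ ^ ((n : ℝ) - 2) • gradient u y) x ≤ 0)
      ↔ (α ≤ 0 ∨ 1 ≤ α) := by
  have hflux : (fun y => ‖gradient u y‖ ^ ((n : ℝ) - 2) • gradient u y) =
      pLaplaceFlux n fun x => log ‖x‖ ^ α := by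
    rw [hu]
    rfl
  have hk : (0 : ℝ) < n - 1 := by
    have : (2 : ℝ) ≤ n := by exact_mod_cast hn
    linarith
  have hweight : ∀ x : EuclideanSpace ℝ (Fin n), 1 < ‖x‖ →
      0 < log ‖x‖ ^ ((α - 1) * (n - 1) - 1) / ‖x‖ ^ n := fun x hx =>
    div_pos (rpow_pos_of_pos (log_pos hx) _) (pow_pos (one_pos.trans hx) n)
  have : Nonempty (Fin n) := ⟨⟨0, by omega⟩⟩
  obtain ⟨x₀, hx₀⟩ := NormedSpace.exists_lt_norm ℝ (EuclideanSpace ℝ (Fin n)) 1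
  rw [hflux, ← rpow_abs_mul_self_mul_sub_one_nonneg_iff (q := (n : ℝ) - 2) hk]
  constructor
  · intro h
    have h₀ := neg_nonpos.mp (h x₀ hx₀)
    rw [vdiv_pLaplaceFlux_log_rpow_norm hx₀] at h₀
    exact (mul_nonneg_iff_of_pos_right (hweight x₀ hx₀)).mp h₀
  · intro hK x hx
    rw [vdiv_pLaplaceFlux_log_rpow_norm hx, neg_nonpos]
    exact mul_nonneg hK (hweight x hx).le
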